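/- Let s>1 be non-integer, write s=k+σ with k∈ℕ and 0<σ<1, and let d∈ℕ. Let Ω₁,Ω₂⊂ℝ^d be bounded Lipschitz domains. Let f₁:Ω₁→ℝ^d be bi-Lipschitz with f₁(Ω₁)⊆Ω₂ and with each component in C^s(Ω₁), and let f₂∈C^s(Ω₂) be ℂ-valued. Then f₂∘f₁∈C^s(Ω₁). -/

import Mathlib

open MeasureTheory Metric Set
open scoped ENNReal

noncomputable section

/-- The last coordinate index of `Fin d`, for `0 < d`. -/
def lastIdx (d : ℕ) (hd : 0 < d) : Fin d := ⟨d - 1, by omega⟩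

/-- `Ω ⊂ ℝ^d` is a bounded `(δ,R)`-Lipschitz domain: near every boundary point, after a
translation sending the point to the origin and a rotation, `Ω` coincides inside the cube
`Q(0,R)` with the supergraph (in the last coordinate) of a `δ`-Lipschitz function of the
remaining coordinates, supported in `[-4R,4R]^{d-1}`. -/
def IsLipDomainD {d : ℕ} (hd : 0 < d) (δ R : ℝ)
    (Ω : Set (EuclideanSpace ℝ (Fin d))) : Prop :=
  IsOpen Ω ∧ IsConnected Ω ∧ Bornology.IsBounded Ω ∧
  ∀ z ∈ frontier Ω,
    ∃ g : EuclideanSpace ℝ (Fin d) ≃ₗᵢ[ℝ] EuclideanSpace ℝ (Fin d),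
    ∃ A : EuclideanSpace ℝ (Fin d) → ℝ,
      LipschitzWith (Real.toNNReal δ) A ∧
      (∀ x y : EuclideanSpace ℝ (Fin d),
        (∀ i : Fin d, i ≠ lastIdx d hd → x i = y i) → A x = A y) ∧
      (∀ x : EuclideanSpace ℝ (Fin d),
        (∃ i : Fin d, i ≠ lastIdx d hd ∧ 4 * R < |x i|) → A x = 0) ∧
      ((fun w => g (w - z)) '' Ω) ∩ {x | ∀ i : Fin d, |x i| < R}
        = {x | (∀ i : Fin d, |x i| < R) ∧ A x < x (lastIdx d hd)}

/-- `f ∈ C^{k+σ}(U)`: `f` is `k` times continuously differentiable on `U`, its derivatives up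
to order `k` are bounded on `U`, and its `k`-th derivative is `σ`-Hölder on `U`. -/
def MemHolderCs {E F : Type*} [NormedAddCommGroup E] [NormedSpace ℝ E]
    [NormedAddCommGroup F] [NormedSpace ℝ F]
    (k : ℕ) (σ : ℝ) (U : Set E) (f : E → F) : Prop :=
  ContDiffOn ℝ (k : ℕ∞) f U ∧
  (∀ i ≤ k, ∃ M : ℝ, ∀ x ∈ U, ‖iteratedFDerivWithin ℝ i f U x‖ ≤ M) ∧
  (∃ H : ℝ, ∀ x ∈ U, ∀ y ∈ U,
    ‖iteratedFDerivWithin ℝ k f U x - iteratedFDerivWithin ℝ k f U y‖ ≤ H * ‖x - y‖ ^ σ)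

/-!
Call `f` of class `C^{k,σ}` in the strong sense if all its derivatives of order `≤ k`, not just
the `k`-th, are bounded and `σ`-Hölder. By induction on `k`, using the Leibniz rule and the chain
rule `D(f₂ ∘ f₁) = (Df₂ ∘ f₁) · Df₁`, this class is stable under bounded bilinear maps and under
composition with Lipschitz maps. On a Lipschitz domain, two nearby points are joined inside the
domain by three segments of total length comparable to their distance: from a boundary point on
the segment between them, take a chart and move up along its vertical direction, across, and back
down. Hence a bounded function with bounded derivative is Lipschitz at small scales and therefore
`σ`-Hölder, so on Lipschitz domains the class of the statement coincides with the strong one.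
-/

section BoundedHolder

variable {E F G : Type*} [SeminormedAddCommGroup E] [SeminormedAddCommGroup F]
  [SeminormedAddCommGroup G]
  {σ : ℝ} {U : Set E} {f g : E → F}

def BoundedHolderOn (σ : ℝ) (U : Set E) (f : E → F) : Prop :=
  (∃ M, ∀ x ∈ U, ‖f x‖ ≤ M) ∧ ∃ H, ∀ x ∈ U, ∀ y ∈ U, ‖f x - f y‖ ≤ H * ‖x - y‖ ^ σ

namespace BoundedHolderOn

theorem exists_nonneg_constants (hf : BoundedHolderOn σ U f) :
    ∃ M H : ℝ, 0 ≤ M ∧ 0 ≤ H ∧ (∀ x ∈ U, ‖f x‖ ≤ M) ∧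
      ∀ x ∈ U, ∀ y ∈ U, ‖f x - f y‖ ≤ H * ‖x - y‖ ^ σ := by
  obtain ⟨⟨M, hM⟩, H, hH⟩ := hf
  refine ⟨max M 0, max H 0, le_max_right _ _, le_max_right _ _,
    fun x hx => (hM x hx).trans (le_max_left _ _), fun x hx y hy => (hH x hx y hy).trans ?_⟩
  gcongr
  exact le_max_left _ _

theorem congr (hf : BoundedHolderOn σ U f) (h : EqOn f g U) : BoundedHolderOn σ U g := by
  obtain ⟨⟨M, hM⟩, H, hH⟩ := hf
  exact ⟨⟨M, fun x hx => h hx ▸ hM x hx⟩, H, fun x hx y hy => h hx ▸ h hy ▸ hH x hx y hy⟩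

theorem _root_.boundedHolderOn_congr (h : EqOn f g U) :
    BoundedHolderOn σ U f ↔ BoundedHolderOn σ U g :=
  ⟨fun hf => hf.congr h, fun hg => hg.congr h.symm⟩

theorem const (c : F) : BoundedHolderOn σ U fun _ => c :=
  ⟨⟨‖c‖, fun _ _ => le_rfl⟩, 0, fun _ _ _ _ => by simp⟩

theorem add (hf : BoundedHolderOn σ U f) (hg : BoundedHolderOn σ U g) :
    BoundedHolderOn σ U fun x => f x + g x := by
  obtain ⟨⟨Mf, hMf⟩, Hf, hHf⟩ := hf
  obtain ⟨⟨Mg, hMg⟩, Hg, hHg⟩ := hg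
  refine ⟨⟨Mf + Mg, fun x hx => (norm_add_le _ _).trans (add_le_add (hMf x hx) (hMg x hx))⟩,
    Hf + Hg, fun x hx y hy => ?_⟩
  calc ‖f x + g x - (f y + g y)‖ = ‖(f x - f y) + (g x - g y)‖ := by rw [add_sub_add_comm]
    _ ≤ Hf * ‖x - y‖ ^ σ + Hg * ‖x - y‖ ^ σ :=
      (norm_add_le _ _).trans (add_le_add (hHf x hx y hy) (hHg x hx y hy))
    _ = (Hf + Hg) * ‖x - y‖ ^ σ := by ring

theorem clm_comp [NormedSpace ℝ F] [NormedSpace ℝ G] (L : F →L[ℝ] G)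
    (hf : BoundedHolderOn σ U f) : BoundedHolderOn σ U fun x => L (f x) := by
  obtain ⟨⟨M, hM⟩, H, hH⟩ := hf
  refine ⟨⟨‖L‖ * M, fun x hx => (L.le_opNorm _).trans (by gcongr; exact hM x hx)⟩,
    ‖L‖ * H, fun x hx y hy => ?_⟩
  calc ‖L (f x) - L (f y)‖ ≤ ‖L‖ * ‖f x - f y‖ := by rw [← map_sub]; exact L.le_opNorm _
    _ ≤ ‖L‖ * (H * ‖x - y‖ ^ σ) := by gcongr; exact hH x hx y hy
    _ = ‖L‖ * H * ‖x - y‖ ^ σ := by ring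

theorem _root_.LinearIsometryEquiv.boundedHolderOn_comp_iff [Module ℝ F] [Module ℝ G]
    (L : F ≃ₗᵢ[ℝ] G) : BoundedHolderOn σ U (fun x => L (f x)) ↔ BoundedHolderOn σ U f := by
  simp only [BoundedHolderOn, ← map_sub, LinearIsometryEquiv.norm_map]

theorem bilinear {F₁ F₂ : Type*} [SeminormedAddCommGroup F₁] [NormedSpace ℝ F₁]
    [SeminormedAddCommGroup F₂] [NormedSpace ℝ F₂] [NormedSpace ℝ G] (B : F₁ →L[ℝ] F₂ →L[ℝ] G)
    {f : E → F₁} {g : E → F₂} (hf : BoundedHolderOn σ U f) (hg : BoundedHolderOn σ U g) :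
    BoundedHolderOn σ U fun x => B (f x) (g x) := by
  obtain ⟨Mf, Hf, hMf0, hHf0, hMf, hHf⟩ := hf.exists_nonneg_constants
  obtain ⟨Mg, Hg, -, hHg0, hMg, hHg⟩ := hg.exists_nonneg_constants
  refine ⟨⟨‖B‖ * Mf * Mg, fun x hx => (B.le_opNorm₂ _ _).trans ?_⟩,
    ‖B‖ * (Hf * Mg + Mf * Hg), fun x hx y hy => ?_⟩
  · gcongr
    exacts [hMf x hx, hMg x hx]
  calc ‖B (f x) (g x) - B (f y) (g y)‖ = ‖B (f x - f y) (g x) + B (f y) (g x - g y)‖ := by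
        rw [map_sub, map_sub, sub_apply]; abel_nf
    _ ≤ ‖B‖ * ‖f x - f y‖ * ‖g x‖ + ‖B‖ * ‖f y‖ * ‖g x - g y‖ :=
        (norm_add_le _ _).trans (add_le_add (B.le_opNorm₂ _ _) (B.le_opNorm₂ _ _))
    _ ≤ ‖B‖ * (Hf * ‖x - y‖ ^ σ) * Mg + ‖B‖ * Mf * (Hg * ‖x - y‖ ^ σ) := by
        gcongr
        exacts [hHf x hx y hy, hMg x hx, hMf y hy, hHg x hx y hy]
    _ = ‖B‖ * (Hf * Mg + Mf * Hg) * ‖x - y‖ ^ σ := by ring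

theorem comp_lipschitzOnWith {V : Set F} {g : F → G} {f : E → F} {K : NNReal} (hσ : 0 ≤ σ)
    (hg : BoundedHolderOn σ V g) (hf : LipschitzOnWith K f U) (hUV : MapsTo f U V) :
    BoundedHolderOn σ U (g ∘ f) := by
  obtain ⟨M, H, -, hH0, hM, hH⟩ := hg.exists_nonneg_constants
  refine ⟨⟨M, fun x hx => hM _ (hUV hx)⟩, H * K ^ σ, fun x hx y hy => ?_⟩
  calc ‖g (f x) - g (f y)‖ ≤ H * ‖f x - f y‖ ^ σ := hH _ (hUV hx) _ (hUV hy)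
    _ ≤ H * (K * ‖x - y‖) ^ σ := by
        gcongr
        simpa only [dist_eq_norm] using hf.dist_le_mul x hx y hy
    _ = H * K ^ σ * ‖x - y‖ ^ σ := by
        rw [Real.mul_rpow K.coe_nonneg (norm_nonneg _)]; ring

theorem of_bounded_of_lipschitz_at_small_scales {M C ε : ℝ} (hσ0 : 0 ≤ σ) (hσ1 : σ ≤ 1)
    (hε : 0 < ε) (hC : 0 ≤ C) (hb : ∀ x ∈ U, ‖f x‖ ≤ M)
    (hlip : ∀ x ∈ U, ∀ y ∈ U, ‖x - y‖ < ε → ‖f x - f y‖ ≤ C * ‖x - y‖) :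
    BoundedHolderOn σ U f := by
  refine ⟨⟨M, hb⟩, max (C * ε ^ (1 - σ)) (2 * M / ε ^ σ), fun x hx y hy => ?_⟩
  have hεσ : 0 < ε ^ σ := Real.rpow_pos_of_pos hε σ
  rcases lt_or_ge ‖x - y‖ ε with hnear | hfar
  · calc ‖f x - f y‖ ≤ C * ‖x - y‖ := hlip x hx y hy hnear
      _ = C * ‖x - y‖ ^ (1 - σ) * ‖x - y‖ ^ σ := by
          rw [mul_assoc, ← Real.rpow_add' (norm_nonneg _) (by norm_num), sub_add_cancel,
            Real.rpow_one]
      _ ≤ C * ε ^ (1 - σ) * ‖x - y‖ ^ σ := by gcongr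
      _ ≤ _ := by gcongr; exact le_max_left _ _
  · calc ‖f x - f y‖ ≤ ‖f x‖ + ‖f y‖ := norm_sub_le _ _
      _ ≤ 2 * M / ε ^ σ * ε ^ σ := by
          rw [div_mul_cancel₀ _ hεσ.ne']; linarith [hb x hx, hb y hy]
      _ ≤ 2 * M / ε ^ σ * ‖x - y‖ ^ σ := by
          have : 0 ≤ M := (norm_nonneg _).trans (hb x hx)
          gcongr
      _ ≤ _ := by gcongr; exact le_max_right _ _

end BoundedHolderOn

end BoundedHolder

section ThreeSegments

variable {E F : Type*} [NormedAddCommGroup E] [NormedSpace ℝ E]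
  [NormedAddCommGroup F] [NormedSpace ℝ F]

def JoinedByThreeSegments (ε K : ℝ) (U : Set E) : Prop :=
  ∀ x ∈ U, ∀ y ∈ U, ‖x - y‖ < ε → ∃ p q : E,
    segment ℝ x p ⊆ U ∧ segment ℝ p q ⊆ U ∧ segment ℝ q y ⊆ U ∧
    ‖x - p‖ + ‖p - q‖ + ‖q - y‖ ≤ K * ‖x - y‖

variable {U : Set E} {f : E → F} {f' : E → E →L[ℝ] F} {M : ℝ}

theorem norm_image_sub_le_of_segment_subset (hf : ∀ x ∈ U, HasFDerivWithinAt f (f' x) U x)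
    (hM : ∀ x ∈ U, ‖f' x‖ ≤ M) {a b : E} (hab : segment ℝ a b ⊆ U) :
    ‖f b - f a‖ ≤ M * ‖b - a‖ :=
  (convex_segment a b).norm_image_sub_le_of_norm_hasFDerivWithin_le
    (fun x hx => (hf x (hab hx)).mono hab) (fun x hx => hM x (hab hx))
    (left_mem_segment ℝ a b) (right_mem_segment ℝ a b)

theorem JoinedByThreeSegments.norm_image_sub_le {ε K : ℝ} (hU : JoinedByThreeSegments ε K U)
    (hf : ∀ x ∈ U, HasFDerivWithinAt f (f' x) U x) (hM : ∀ x ∈ U, ‖f' x‖ ≤ M)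
    {x y : E} (hx : x ∈ U) (hy : y ∈ U) (hxy : ‖x - y‖ < ε) :
    ‖f x - f y‖ ≤ M * K * ‖x - y‖ := by
  obtain ⟨p, q, hxp, hpq, hqy, hlen⟩ := hU x hx y hy hxy
  have hM0 : 0 ≤ M := (norm_nonneg _).trans (hM x hx)
  have h₁ := norm_image_sub_le_of_segment_subset hf hM hxp
  have h₂ := norm_image_sub_le_of_segment_subset hf hM hpq
  have h₃ := norm_image_sub_le_of_segment_subset hf hM hqy
  rw [norm_sub_rev p x] at h₁; rw [norm_sub_rev q p] at h₂; rw [norm_sub_rev y q] at h₃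
  calc ‖f x - f y‖ = ‖(f p - f x) + (f q - f p) + (f y - f q)‖ := by
        rw [← norm_neg]; congr 1; abel
    _ ≤ M * ‖x - p‖ + M * ‖p - q‖ + M * ‖q - y‖ :=
        norm_add₃_le.trans (by gcongr)
    _ ≤ M * K * ‖x - y‖ := by
        rw [mul_assoc, ← mul_add, ← mul_add]; gcongr

end ThreeSegments

section ContDiffHolder

variable {E F G : Type*} [NormedAddCommGroup E] [NormedSpace ℝ E]
  [NormedAddCommGroup F] [NormedSpace ℝ F] [NormedAddCommGroup G] [NormedSpace ℝ G]
  {k : ℕ} {σ : ℝ} {U : Set E} {f g : E → F}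

def ContDiffHolderOn (k : ℕ) (σ : ℝ) (U : Set E) (f : E → F) : Prop :=
  ContDiffOn ℝ k f U ∧ ∀ j ≤ k, BoundedHolderOn σ U (iteratedFDerivWithin ℝ j f U)

theorem boundedHolderOn_iteratedFDerivWithin_zero_iff :
    BoundedHolderOn σ U (iteratedFDerivWithin ℝ 0 f U) ↔ BoundedHolderOn σ U f := by
  rw [iteratedFDerivWithin_zero_eq_comp]
  exact (continuousMultilinearCurryFin0 ℝ E F).symm.boundedHolderOn_comp_iff

theorem boundedHolderOn_iteratedFDerivWithin_succ_iff (hU : UniqueDiffOn ℝ U) (j : ℕ) :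
    BoundedHolderOn σ U (iteratedFDerivWithin ℝ (j + 1) f U) ↔
      BoundedHolderOn σ U (iteratedFDerivWithin ℝ j (fderivWithin ℝ f U) U) := by
  rw [boundedHolderOn_congr fun x hx => iteratedFDerivWithin_succ_eq_comp_right hU hx]
  exact (continuousMultilinearCurryRightEquiv' ℝ j E F).symm.boundedHolderOn_comp_iff

theorem contDiffHolderOn_zero :
    ContDiffHolderOn 0 σ U f ↔ ContDiffOn ℝ 0 f U ∧ BoundedHolderOn σ U f := by
  simp only [ContDiffHolderOn, Nat.le_zero, forall_eq, Nat.cast_zero,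
    boundedHolderOn_iteratedFDerivWithin_zero_iff]

theorem contDiffHolderOn_succ_iff (hU : UniqueDiffOn ℝ U) :
    ContDiffHolderOn (k + 1) σ U f ↔ ContDiffOn ℝ (k + 1 : ℕ) f U ∧ BoundedHolderOn σ U f ∧
      ContDiffHolderOn k σ U (fderivWithin ℝ f U) := by
  constructor
  · rintro ⟨hcd, hb⟩
    exact ⟨hcd, boundedHolderOn_iteratedFDerivWithin_zero_iff.1 (hb 0 (Nat.zero_le _)),
      hcd.fderivWithin hU (by exact_mod_cast le_rfl), fun j hj =>
        (boundedHolderOn_iteratedFDerivWithin_succ_iff hU j).1 (hb (j + 1) (by omega))⟩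
  · rintro ⟨hcd, hb, -, hdb⟩
    refine ⟨hcd, fun j hj => ?_⟩
    rcases j with _ | j
    · exact boundedHolderOn_iteratedFDerivWithin_zero_iff.2 hb
    · exact (boundedHolderOn_iteratedFDerivWithin_succ_iff hU j).2 (hdb j (by omega))

namespace ContDiffHolderOn

theorem of_le (hf : ContDiffHolderOn k σ U f) {j : ℕ} (hjk : j ≤ k) :
    ContDiffHolderOn j σ U f :=
  ⟨hf.1.of_le (by exact_mod_cast hjk), fun i hi => hf.2 i (hi.trans hjk)⟩

theorem congr (hf : ContDiffHolderOn k σ U f) (h : EqOn f g U) : ContDiffHolderOn k σ U g :=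
  ⟨hf.1.congr fun _ hx => (h hx).symm, fun j hj =>
    (hf.2 j hj).congr fun _ hx => iteratedFDerivWithin_congr h hx j⟩

theorem zero : ContDiffHolderOn k σ U (0 : E → F) :=
  ⟨contDiffOn_const, fun j _ => by rw [iteratedFDerivWithin_zero]; exact BoundedHolderOn.const 0⟩

theorem add (hU : UniqueDiffOn ℝ U) (hf : ContDiffHolderOn k σ U f)
    (hg : ContDiffHolderOn k σ U g) : ContDiffHolderOn k σ U fun x => f x + g x :=
  ⟨hf.1.add hg.1, fun j hj => ((hf.2 j hj).add (hg.2 j hj)).congr fun x hx =>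
    (fun_iteratedFDerivWithin_add_apply ((hf.of_le hj).1 x hx) ((hg.of_le hj).1 x hx) hU hx).symm⟩

theorem clm_comp (hU : UniqueDiffOn ℝ U) (L : F →L[ℝ] G) (hf : ContDiffHolderOn k σ U f) :
    ContDiffHolderOn k σ U fun x => L (f x) :=
  ⟨L.contDiff.comp_contDiffOn hf.1, fun j hj =>
    ((hf.2 j hj).clm_comp
      (ContinuousLinearMap.compContinuousMultilinearMapL ℝ (fun _ : Fin j => E) F G L)).congr
      fun x hx =>
      (L.iteratedFDerivWithin_comp_left (hf.1 x hx) hU hx (by exact_mod_cast hj)).symm⟩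

end ContDiffHolderOn

end ContDiffHolder

section Calculus

universe u

variable {E F₁ F₂ G : Type u} [NormedAddCommGroup E] [NormedSpace ℝ E]
  [NormedAddCommGroup F₁] [NormedSpace ℝ F₁] [NormedAddCommGroup F₂] [NormedSpace ℝ F₂]
  [NormedAddCommGroup G] [NormedSpace ℝ G] {k : ℕ} {σ : ℝ} {U : Set E}

theorem ContDiffHolderOn.bilinear (hU : UniqueDiffOn ℝ U) (B : F₁ →L[ℝ] F₂ →L[ℝ] G)
    {f : E → F₁} {g : E → F₂} (hf : ContDiffHolderOn k σ U f) (hg : ContDiffHolderOn k σ U g) :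
    ContDiffHolderOn k σ U fun x => B (f x) (g x) := by
  induction k generalizing F₁ F₂ G with
  | zero =>
    rw [contDiffHolderOn_zero] at hf hg ⊢
    exact ⟨B.isBoundedBilinearMap.contDiff.comp₂_contDiffOn hf.1 hg.1, hf.2.bilinear B hg.2⟩
  | succ k ih =>
    have hfk := hf.of_le k.le_succ
    have hgk := hg.of_le k.le_succ
    rw [contDiffHolderOn_succ_iff hU] at hf hg ⊢
    refine ⟨B.isBoundedBilinearMap.contDiff.comp₂_contDiffOn hf.1 hg.1, hf.2.1.bilinear B hg.2.1,
      ((ih (B.precompR E) hfk hg.2.2).add hU (ih (B.precompL E) hf.2.2 hgk)).congr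
        fun x hx => ?_⟩
    exact (B.fderivWithin_of_bilinear (hf.1.differentiableOn (by simp) x hx)
      (hg.1.differentiableOn (by simp) x hx) (hU x hx)).symm

theorem ContDiffHolderOn.comp {E' : Type u} [NormedAddCommGroup E'] [NormedSpace ℝ E']
    {V : Set E'} (hU : UniqueDiffOn ℝ U) (hV : UniqueDiffOn ℝ V) (hσ : 0 ≤ σ) {g : E' → G}
    {f : E → E'} {K : NNReal} (hg : ContDiffHolderOn k σ V g) (hf : ContDiffHolderOn k σ U f)
    (hlip : LipschitzOnWith K f U) (hUV : MapsTo f U V) : ContDiffHolderOn k σ U (g ∘ f) := by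
  induction k generalizing G g with
  | zero =>
    rw [contDiffHolderOn_zero] at hf hg ⊢
    exact ⟨hg.1.comp hf.1 hUV, hg.2.comp_lipschitzOnWith hσ hlip hUV⟩
  | succ k ih =>
    have hfk := hf.of_le k.le_succ
    rw [contDiffHolderOn_succ_iff hU] at hf ⊢
    rw [contDiffHolderOn_succ_iff hV] at hg
    refine ⟨hg.1.comp hf.1 hUV, hg.2.1.comp_lipschitzOnWith hσ hlip hUV,
      ((ih hg.2.2 hfk).bilinear hU (ContinuousLinearMap.compL ℝ E E' G) hf.2.2).congr
        fun x hx => ?_⟩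
    rw [fderivWithin_comp x (hg.1.differentiableOn (by simp) _ (hUV hx))
      (hf.1.differentiableOn (by simp) x hx) hUV (hU x hx)]
    rfl

end Calculus

section Upgrade

variable {E F : Type*} [NormedAddCommGroup E] [NormedSpace ℝ E]
  [NormedAddCommGroup F] [NormedSpace ℝ F] {k : ℕ} {σ : ℝ} {U : Set E} {f : E → F}

theorem MemHolderCs.contDiffHolderOn {ε K : ℝ} (hU : UniqueDiffOn ℝ U)
    (hseg : JoinedByThreeSegments ε K U) (hε : 0 < ε) (hK : 0 ≤ K) (hσ0 : 0 ≤ σ) (hσ1 : σ ≤ 1)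
    (hf : MemHolderCs k σ U f) : ContDiffHolderOn k σ U f := by
  obtain ⟨hcd, hbdd, hhold⟩ := hf
  refine ⟨hcd, fun j hj => ?_⟩
  rcases hj.eq_or_lt with rfl | hjk
  · exact ⟨hbdd j le_rfl, hhold⟩
  obtain ⟨M₀, hM₀⟩ := hbdd j hj
  obtain ⟨M₁, hM₁⟩ := hbdd (j + 1) hjk
  have hdiff := hcd.differentiableOn_iteratedFDerivWithin (by exact_mod_cast hjk) hU
  refine .of_bounded_of_lipschitz_at_small_scales hσ0 hσ1 hε (by positivity) hM₀
    fun x hx y hy hxy => hseg.norm_image_sub_le (M := max M₁ 0)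
      (fun z hz => (hdiff z hz).hasFDerivWithinAt) (fun z hz => ?_) hx hy hxy
  rw [norm_fderivWithin_iteratedFDerivWithin]
  exact (hM₁ z hz).trans (le_max_left _ _)

theorem ContDiffHolderOn.memHolderCs (hf : ContDiffHolderOn k σ U f) : MemHolderCs k σ U f :=
  ⟨hf.1, fun j hj => (hf.2 j hj).1, (hf.2 k le_rfl).2⟩

theorem contDiffHolderOn_euclideanSpace {ι : Type*} [Fintype ι] {f : E → EuclideanSpace ℝ ι}
    (hU : UniqueDiffOn ℝ U) (h : ∀ i, ContDiffHolderOn k σ U fun x => f x i) :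
    ContDiffHolderOn k σ U f := by
  classical
  have hf : f = ∑ i, fun x =>
      ContinuousLinearMap.toSpanSingleton ℝ (EuclideanSpace.single i (1 : ℝ)) (f x i) := by
    ext x j
    simp [Pi.single_apply]
  rw [hf]
  exact Finset.sum_induction _ (ContDiffHolderOn k σ U) (fun _ _ => ContDiffHolderOn.add hU)
    ContDiffHolderOn.zero fun i _ => (h i).clm_comp hU _

end Upgrade

section SupergraphCharts

variable {E : Type*} [NormedAddCommGroup E] [NormedSpace ℝ E]

theorem exists_mem_segment_frontier_of_not_subset {Ω : Set E} (hΩ : IsOpen Ω) {x y : E}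
    (hx : x ∈ Ω) (hxy : ¬ segment ℝ x y ⊆ Ω) : ∃ z ∈ segment ℝ x y, z ∈ frontier Ω := by
  by_contra! hz
  refine hxy ((convex_segment x y).isPreconnected.subset_of_closure_inter_subset hΩ
    ⟨x, left_mem_segment ℝ x y, hx⟩ fun w ⟨hwcl, hwseg⟩ => ?_)
  by_contra hwΩ
  exact hz w hwseg (hΩ.frontier_eq ▸ ⟨hwcl, hwΩ⟩)

theorem LipschitzWith.apply_add_smul_sub_le {A : E → ℝ} {δ : NNReal} (hA : LipschitzWith δ A)
    (a b : E) {θ : ℝ} (h0 : 0 ≤ θ) (h1 : θ ≤ 1) :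
    A (a + θ • (b - a)) ≤ (1 - θ) * A a + θ * A b + 2 * δ * θ * (1 - θ) * ‖b - a‖ := by
  have hle : ∀ w, A (a + θ • (b - a)) ≤ A w + δ * ‖a + θ • (b - a) - w‖ := fun w => by
    have := hA.dist_le_mul (a + θ • (b - a)) w
    rw [Real.dist_eq, dist_eq_norm] at this
    linarith [le_abs_self (A (a + θ • (b - a)) - A w)]
  have ha := hle a
  have hb := hle b
  rw [add_sub_cancel_left, norm_smul, Real.norm_of_nonneg h0] at ha
  rw [show a + θ • (b - a) - b = (1 - θ) • (a - b) by module, norm_smul,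
    Real.norm_of_nonneg (by linarith), norm_sub_rev] at hb
  nlinarith [mul_le_mul_of_nonneg_left ha (sub_nonneg.2 h1), mul_le_mul_of_nonneg_left hb h0]

variable (ℓ : E →L[ℝ] ℝ) {e : E} {A : E → ℝ}

/-- The graph description of a Lipschitz domain, with the cube `Q(0,R)` replaced by the ball of
radius `R` and the last coordinate by a functional `ℓ` with vertical direction `e`. -/
def HasSupergraphCharts (e : E) (δ R : ℝ) (Ω : Set E) : Prop :=
  ∀ z ∈ frontier Ω, ∃ (Φ : E ≃ᵃⁱ[ℝ] E) (A : E → ℝ), Φ z = 0 ∧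
    LipschitzWith (Real.toNNReal δ) A ∧ (∀ u (τ : ℝ), A (u + τ • e) = A u) ∧
    ∀ u, ‖u‖ < R → (Φ.symm u ∈ Ω ↔ A u < ℓ u)

variable {ℓ}

section Supergraph

variable (hℓe : ℓ e = 1) (hAe : ∀ u (τ : ℝ), A (u + τ • e) = A u)
include hℓe hAe

theorem segment_add_smul_subset_supergraph {u : E} (hu : A u < ℓ u) {h : ℝ} (hh : 0 ≤ h) :
    segment ℝ u (u + h • e) ⊆ {w | A w < ℓ w} := by
  rw [segment_eq_image']
  rintro _ ⟨θ, ⟨hθ0, -⟩, rfl⟩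
  simp only [mem_ofPred_eq, add_sub_cancel_left, smul_smul, hAe, map_add, map_smul, hℓe,
    smul_eq_mul, mul_one]
  nlinarith

theorem segment_add_smul_add_smul_subset_supergraph {δ : ℝ} (hA : LipschitzWith δ.toNNReal A)
    (hδ : 0 ≤ δ) {a b : E} (ha : A a < ℓ a) (hb : A b < ℓ b) {h : ℝ} (hh : δ * ‖b - a‖ ≤ h) :
    segment ℝ (a + h • e) (b + h • e) ⊆ {w | A w < ℓ w} := by
  rw [segment_eq_image']
  rintro _ ⟨θ, ⟨hθ0, hθ1⟩, rfl⟩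
  have hA' := hA.apply_add_smul_sub_le a b hθ0 hθ1
  rw [Real.coe_toNNReal δ hδ] at hA'
  simp only [mem_ofPred_eq]
  rw [show a + h • e + θ • (b + h • e - (a + h • e)) = a + θ • (b - a) + h • e by
    module, hAe, map_add, map_add, map_smul, map_smul, map_sub, hℓe, smul_eq_mul, smul_eq_mul,
    mul_one]
  have hconv : (1 - θ) * A a + θ * A b < (1 - θ) * ℓ a + θ * ℓ b := by
    rcases hθ1.lt_or_eq with hθ1 | rfl
    · nlinarith [mul_lt_mul_of_pos_left ha (sub_pos.2 hθ1), mul_le_mul_of_nonneg_left hb.le hθ0]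
    · linarith
  have hbump : 2 * δ * θ * (1 - θ) * ‖b - a‖ ≤ δ * ‖b - a‖ := by
    nlinarith [mul_nonneg hδ (norm_nonneg (b - a)),
      mul_nonneg (mul_nonneg hδ (norm_nonneg (b - a))) (sq_nonneg (2 * θ - 1))]
  linarith

end Supergraph

theorem HasSupergraphCharts.joinedByThreeSegments {δ R : ℝ} {Ω : Set E} (hΩ : IsOpen Ω)
    (hδ : 0 ≤ δ) (he : ‖e‖ = 1) (hℓe : ℓ e = 1) (hchart : HasSupergraphCharts ℓ e δ R Ω) :
    JoinedByThreeSegments (R / (1 + δ)) (1 + 2 * δ) Ω := by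
  intro x hx y hy hxy
  by_cases hseg : segment ℝ x y ⊆ Ω
  · refine ⟨y, y, hseg, ?_, ?_, ?_⟩ <;> simp [hy]
    nlinarith [norm_nonneg (x - y)]
  obtain ⟨z, hzseg, hz⟩ := exists_mem_segment_frontier_of_not_subset hΩ hx hseg
  obtain ⟨Φ, A, hΦz, hA, hAe, hΦΩ⟩ := hchart z hz
  have hdist := dist_add_dist_of_mem_segment hzseg
  set L := ‖x - y‖ with hL_def
  set h := δ * L with hh_def
  have hL : 0 ≤ L := norm_nonneg _
  have hh : 0 ≤ h := mul_nonneg hδ hL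
  have hLR : (1 + δ) * L < R := by rw [lt_div_iff₀ (by positivity)] at hxy; linarith
  have hnorm : ∀ w, ‖Φ w‖ = dist w z := fun w => by
    rw [← dist_zero_right, ← hΦz, Φ.dist_map]
  have hxz : ‖Φ x‖ ≤ L := by
    rw [hnorm, hL_def, ← dist_eq_norm]; linarith [dist_nonneg (x := z) (y := y)]
  have hyz : ‖Φ y‖ ≤ L := by
    rw [hnorm, dist_comm, hL_def, ← dist_eq_norm]; linarith [dist_nonneg (x := x) (y := z)]
  have hxy' : ‖Φ y - Φ x‖ = L := by rw [← dist_eq_norm, Φ.dist_map, dist_comm, dist_eq_norm]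
  have hmem : ∀ w ∈ Ω, ‖Φ w‖ ≤ L → A (Φ w) < ℓ (Φ w) := fun w hw hwL =>
    (hΦΩ _ (by nlinarith)).1 (by rwa [Φ.symm_apply_apply])
  have hlift : ∀ w : E, ‖w‖ ≤ L → ‖w + h • e‖ ≤ (1 + δ) * L := fun w hw => by
    grw [norm_add_le, norm_smul, he, Real.norm_of_nonneg hh, hw]; linarith
  have hsegΩ : ∀ u v : E, ‖u‖ ≤ (1 + δ) * L → ‖v‖ ≤ (1 + δ) * L →
      segment ℝ u v ⊆ {w | A w < ℓ w} → segment ℝ (Φ.symm u) (Φ.symm v) ⊆ Ω := by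
    intro u v hu hv huv
    rw [← Φ.symm.coe_toAffineEquiv, ← AffineEquiv.coe_toAffineMap, ← image_segment]
    rintro _ ⟨w, hw, rfl⟩
    refine (hΦΩ w (lt_of_le_of_lt ?_ hLR)).2 (huv hw)
    simpa using (convex_closedBall (0 : E) _).segment_subset (by simpa using hu)
      (by simpa using hv) hw
  refine ⟨Φ.symm (Φ x + h • e), Φ.symm (Φ y + h • e), ?_, ?_, ?_, ?_⟩
  · simpa only [Φ.symm_apply_apply] using hsegΩ _ _ (by nlinarith) (hlift _ hxz)
      (segment_add_smul_subset_supergraph hℓe hAe (hmem x hx hxz) hh)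
  · exact hsegΩ _ _ (hlift _ hxz) (hlift _ hyz) (segment_add_smul_add_smul_subset_supergraph
      hℓe hAe hA hδ (hmem x hx hxz) (hmem y hy hyz) (by rw [hxy']))
  · rw [segment_symm]
    simpa only [Φ.symm_apply_apply] using hsegΩ _ _ (by nlinarith)
      (hlift _ hyz) (segment_add_smul_subset_supergraph hℓe hAe (hmem y hy hyz) hh)
  · have hsymm : ∀ w u, ‖w - Φ.symm u‖ = ‖Φ w - u‖ := fun w u => by
      rw [← dist_eq_norm, ← Φ.dist_map, Φ.apply_symm_apply, dist_eq_norm]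
    have hup : ∀ w, ‖w - Φ.symm (Φ w + h • e)‖ = h := fun w => by
      rw [hsymm, sub_add_cancel_left, norm_neg, norm_smul, he, mul_one, Real.norm_of_nonneg hh]
    have hacross : ‖Φ.symm (Φ x + h • e) - Φ.symm (Φ y + h • e)‖ = L := by
      rw [← dist_eq_norm, Φ.symm.dist_map, dist_eq_norm, add_sub_add_right_eq_sub, norm_sub_rev,
        hxy']
    rw [hup, hacross, norm_sub_rev, hup, hh_def]
    linarith

theorem IsLipDomainD.hasSupergraphCharts {d : ℕ} {hd : 0 < d} {δ R : ℝ}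
    {Ω : Set (EuclideanSpace ℝ (Fin d))} (hΩ : IsLipDomainD hd δ R Ω) :
    HasSupergraphCharts (EuclideanSpace.proj (lastIdx d hd))
      (EuclideanSpace.single (lastIdx d hd) 1) δ R Ω := by
  obtain ⟨-, -, -, hchart⟩ := hΩ
  intro z hz
  obtain ⟨g, A, hA, hAvert, -, hgraph⟩ := hchart z hz
  refine ⟨(AffineIsometryEquiv.vaddConst ℝ z).symm.trans g.toAffineIsometryEquiv, A, by simp, hA,
    fun u τ => hAvert _ _ fun i hi => by simp [hi], fun u hu => ?_⟩
  have hcube : ∀ i, |u i| < R := fun i => (PiLp.norm_apply_le u i).trans_lt hu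
  have := congrArg (u ∈ ·) hgraph
  simp only [hcube, mem_inter_iff, mem_image, mem_ofPred_eq, implies_true, and_true,
    true_and] at this
  change g.symm u + z ∈ Ω ↔ A u < u (lastIdx d hd)
  rw [← this]
  constructor
  · exact fun h => ⟨_, h, by rw [add_sub_cancel_right, g.apply_symm_apply]⟩
  · rintro ⟨x, hx, rfl⟩
    rwa [g.symm_apply_apply, sub_add_cancel]

end SupergraphCharts

theorem statement12_general (d : ℕ) (hd : 0 < d) (k : ℕ)
    (σ : ℝ) (hσ0 : 0 < σ) (hσ1 : σ < 1)
    (Ω₁ Ω₂ : Set (EuclideanSpace ℝ (Fin d)))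
    (hΩ₁ : ∃ δ R : ℝ, 0 < δ ∧ 0 < R ∧ IsLipDomainD hd δ R Ω₁)
    (hΩ₂ : ∃ δ R : ℝ, 0 < δ ∧ 0 < R ∧ IsLipDomainD hd δ R Ω₂)
    (f₁ : EuclideanSpace ℝ (Fin d) → EuclideanSpace ℝ (Fin d))
    (f₂ : EuclideanSpace ℝ (Fin d) → ℂ)
    (hmaps : Set.MapsTo f₁ Ω₁ Ω₂)
    (hbil : ∃ c C : ℝ, 0 < c ∧ c ≤ C ∧ ∀ x ∈ Ω₁, ∀ y ∈ Ω₁,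
      c * ‖x - y‖ ≤ ‖f₁ x - f₁ y‖ ∧ ‖f₁ x - f₁ y‖ ≤ C * ‖x - y‖)
    (hf₁ : ∀ i : Fin d, MemHolderCs k σ Ω₁ (fun x => f₁ x i))
    (hf₂ : MemHolderCs k σ Ω₂ f₂) :
    MemHolderCs k σ Ω₁ (f₂ ∘ f₁) := by
  obtain ⟨δ₁, R₁, hδ₁, hR₁, hΩ₁⟩ := hΩ₁
  obtain ⟨δ₂, R₂, hδ₂, hR₂, hΩ₂⟩ := hΩ₂
  have hU₁ : UniqueDiffOn ℝ Ω₁ := hΩ₁.1.uniqueDiffOn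
  have hU₂ : UniqueDiffOn ℝ Ω₂ := hΩ₂.1.uniqueDiffOn
  have hseg₁ := hΩ₁.hasSupergraphCharts.joinedByThreeSegments hΩ₁.1 hδ₁.le (by simp) (by simp)
  have hseg₂ := hΩ₂.hasSupergraphCharts.joinedByThreeSegments hΩ₂.1 hδ₂.le (by simp) (by simp)
  obtain ⟨c, C, -, -, hbil⟩ := hbil
  have hlip : LipschitzOnWith C.toNNReal f₁ Ω₁ := .of_dist_le_mul fun x hx y hy => by
    rw [dist_eq_norm, dist_eq_norm]
    exact (hbil x hx y hy).2.trans (by gcongr; exact C.le_coe_toNNReal)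
  have hf₁' : ContDiffHolderOn k σ Ω₁ f₁ := contDiffHolderOn_euclideanSpace hU₁ fun i =>
    (hf₁ i).contDiffHolderOn hU₁ hseg₁ (by positivity) (by positivity) hσ0.le hσ1.le
  have hf₂' := hf₂.contDiffHolderOn hU₂ hseg₂ (by positivity) (by positivity) hσ0.le hσ1.le
  exact (hf₂'.comp hU₁ hU₂ hσ0.le hf₁' hlip hmaps).memHolderCs

/-- composition of Hölder functions.  If `Ω₁, Ω₂ ⊂ ℝ^d` are bounded Lipschitz
domains, `f₁ : Ω₁ → Ω₂` is bi-Lipschitz with components in `C^s(Ω₁)` and `f₂ ∈ C^s(Ω₂)`,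
then `f₂ ∘ f₁ ∈ C^s(Ω₁)`, where `s = k + σ > 1` is non-integer. -/
theorem statement12 (d : ℕ) (hd : 0 < d) (k : ℕ) (hk : 1 ≤ k)
    (σ : ℝ) (hσ0 : 0 < σ) (hσ1 : σ < 1)
    (Ω₁ Ω₂ : Set (EuclideanSpace ℝ (Fin d)))
    (hΩ₁ : ∃ δ R : ℝ, 0 < δ ∧ 0 < R ∧ IsLipDomainD hd δ R Ω₁)
    (hΩ₂ : ∃ δ R : ℝ, 0 < δ ∧ 0 < R ∧ IsLipDomainD hd δ R Ω₂)
    (f₁ : EuclideanSpace ℝ (Fin d) → EuclideanSpace ℝ (Fin d))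
    (f₂ : EuclideanSpace ℝ (Fin d) → ℂ)
    (hmaps : Set.MapsTo f₁ Ω₁ Ω₂)
    (hbil : ∃ c C : ℝ, 0 < c ∧ c ≤ C ∧ ∀ x ∈ Ω₁, ∀ y ∈ Ω₁,
      c * ‖x - y‖ ≤ ‖f₁ x - f₁ y‖ ∧ ‖f₁ x - f₁ y‖ ≤ C * ‖x - y‖)
    (hf₁ : ∀ i : Fin d, MemHolderCs k σ Ω₁ (fun x => f₁ x i))
    (hf₂ : MemHolderCs k σ Ω₂ f₂) :
    MemHolderCs k σ Ω₁ (f₂ ∘ f₁) :=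
  statement12_general d hd k σ hσ0 hσ1 Ω₁ Ω₂ hΩ₁ hΩ₂ f₁ f₂ hmaps hbil hf₁ hf₂
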